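/- Let α ∈ F_{3^n} \ {1, −1} be θ-periodic. Then the equation θ(β) = α has exactly two solutions β₁, β₂ ∈ F_{3^n}: one solution β₁ is θ-periodic (ψ(β₁) has odd order) and the other solution β₂ is not θ-periodic, with ord(ψ(β₂)) = 2·ord(ψ(β₁)). -/

import Mathlib

open OnePoint

variable (F : Type*) [Field F] [DecidableEq F]

/-- The map `θ(x) = x + x⁻¹`, with `θ(0) = θ(∞) = ∞`. -/
def theta : OnePoint F → OnePoint F
  | Option.some x => if x = 0 then ∞ else Option.some (x + x⁻¹)
  | Option.none => ∞

/-- The inverse-square map `s(x) = x⁻²`, with `s(0) = ∞`, `s(∞) = 0`. -/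
def sMap : OnePoint F → OnePoint F
  | Option.some x => if x = 0 then ∞ else Option.some (x⁻¹ ^ 2)
  | Option.none => Option.some 0

/-- The involution `ψ(x) = (x+1)/(x-1)`, with `ψ(1) = ∞`, `ψ(∞) = 1`. -/
def psi : OnePoint F → OnePoint F
  | Option.some x => if x = 1 then ∞ else Option.some ((x + 1) / (x - 1))
  | Option.none => Option.some 1

/-!
In characteristic 3 the involution `ψ` conjugates `θ` to `s(x) = x⁻²`. On `Fˣ` the map
`u ↦ u⁻²` has `u` as a periodic point iff `ord u` is odd: `u^((-2)^k) = u` means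
`ord u ∣ (-2)^k - 1`, and conversely `(-2)^(2φ(m)) = 4^φ(m) ≡ 1 [MOD m]` for odd `m`.
The `θ`-preimages of `α` are the `ψ`-preimages of the two square roots `±b` of `ψ(α)⁻¹`.
Since `ψ(α)` has odd order, one root `b` has odd order, and then `-b` has order `2 · ord b`.
-/

open Function in
theorem Function.Semiconj.mem_periodicPts_iff {α β : Type*} {fa : α → α} {fb : β → β} {g : α → β}
    (h : Semiconj g fa fb) (hg : Injective g) {x : α} :
    g x ∈ periodicPts fb ↔ x ∈ periodicPts fa := by
  simp only [mem_periodicPts, IsPeriodicPt, IsFixedPt, ← (h.iterate_right _).eq, hg.eq_iff]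

theorem mem_periodicPts_zpow_neg_two_iff {G : Type*} [Group G] {u : G} :
    u ∈ Function.periodicPts (· ^ (-2 : ℤ)) ↔ Odd (orderOf u) := by
  simp only [Function.mem_periodicPts, Function.IsPeriodicPt, Function.IsFixedPt, zpow_iterate]
  constructor
  · rintro ⟨k, hk, hu⟩
    have hdvd : (orderOf u : ℤ) ∣ (-2) ^ k - 1 := by
      rw [← Int.modEq_iff_dvd, ← zpow_eq_zpow_iff_modEq, zpow_one, hu]
    have hodd : Odd ((-2 : ℤ) ^ k - 1) :=
      ((even_neg.2 even_two).pow_of_ne_zero hk.ne').sub_odd odd_one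
    rw [← Nat.not_even_iff_odd]
    intro heven
    exact Int.not_even_iff_odd.2 hodd
      (even_iff_two_dvd.2 (((Int.even_coe_nat _).2 heven).two_dvd.trans hdvd))
  · intro hodd
    have heuler : 4 ^ Nat.totient (orderOf u) ≡ 1 [MOD orderOf u] :=
      Nat.ModEq.pow_totient (by simpa using hodd.coprime_two_left.pow_left 2)
    refine ⟨2 * Nat.totient (orderOf u), by simpa using hodd.pos, ?_⟩
    have hexp : (-2 : ℤ) ^ (2 * Nat.totient (orderOf u)) = (4 ^ Nat.totient (orderOf u) : ℕ) := by
      rw [pow_mul]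
      norm_num
    rw [hexp, zpow_natCast]
    simpa using pow_eq_pow_iff_modEq.2 heuler

theorem exists_sq_eq_of_odd_orderOf {M : Type*} [Monoid M] {a : M} (h : Odd (orderOf a)) :
    ∃ b : M, b ^ 2 = a ∧ Odd (orderOf b) := by
  have ⟨k, hk⟩ := h
  refine ⟨a ^ (k + 1), ?_, h.of_dvd_nat (orderOf_pow_dvd _)⟩
  rw [← pow_mul, show (k + 1) * 2 = orderOf a + 1 by omega, pow_succ, pow_orderOf_eq_one, one_mul]

theorem orderOf_inv₀ {G₀ : Type*} [GroupWithZero G₀] (x : G₀) : orderOf x⁻¹ = orderOf x := by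
  rcases eq_or_ne x 0 with rfl | hx
  · rw [inv_zero]
  · have := orderOf_inv (Units.mk0 x hx)
    rwa [← orderOf_units, ← orderOf_units, Units.val_inv_eq_inv_val, Units.val_mk0] at this

theorem orderOf_neg_of_odd_orderOf {R : Type*} [Ring R] [Nontrivial R] (hR : ringChar R ≠ 2)
    {x : R} (hx : Odd (orderOf x)) : orderOf (-x) = 2 * orderOf x := by
  have hneg : orderOf (-1 : R) = 2 := by rw [orderOf_neg_one, if_neg hR]
  rw [← neg_one_mul, (Commute.neg_one_left x).orderOf_mul_eq_mul_orderOf_of_coprime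
    (hneg ▸ hx.coprime_two_left), hneg]

theorem two_ne_zero_of_charP_three {R : Type*} [CommRing R] [Nontrivial R] [CharP R 3] :
    (2 : R) ≠ 0 := by
  rw [show (2 : R) = -1 by linear_combination CharP.cast_eq_zero R 3]
  exact neg_ne_zero.mpr one_ne_zero

variable {F}

section Evaluation

variable {x : F}

@[simp] lemma theta_infty : theta F ∞ = ∞ := rfl

@[simp] lemma theta_zero : theta F (0 : F) = ∞ := if_pos rfl

lemma theta_coe (hx : x ≠ 0) : theta F x = ↑(x + x⁻¹) := if_neg hx

@[simp] lemma psi_infty : psi F ∞ = (1 : F) := rfl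

@[simp] lemma psi_one : psi F (1 : F) = ∞ := if_pos rfl

lemma psi_coe (hx : x ≠ 1) : psi F x = ↑((x + 1) / (x - 1)) := if_neg hx

@[simp] lemma sMap_infty : sMap F ∞ = (0 : F) := rfl

@[simp] lemma sMap_zero : sMap F (0 : F) = ∞ := if_pos rfl

lemma sMap_coe (hx : x ≠ 0) : sMap F x = ↑(x⁻¹ ^ 2) := if_neg hx

end Evaluation

lemma psi_involutive (h2 : (2 : F) ≠ 0) : Function.Involutive (psi F) := by
  intro x
  cases x with
  | infty => simp
  | coe x =>
    rcases eq_or_ne x 1 with rfl | hx1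
    · simp
    have hsub : x - 1 ≠ 0 := sub_ne_zero.mpr hx1
    have hne : (x + 1) / (x - 1) ≠ 1 := by
      rw [Ne, div_eq_one_iff_eq hsub]
      intro h
      exact h2 (by linear_combination h)
    rw [psi_coe hx1, psi_coe hne, OnePoint.coe_eq_coe, div_add_one hsub, div_sub_one hsub,
      div_div_div_cancel_right₀ hsub, show x + 1 - (x - 1) = 2 by ring, div_eq_iff h2]
    ring

lemma sMap_psi_coe {x : F} (hx : x ≠ -1) :
    sMap F (psi F x) = (((x - 1) ^ 2 / (x + 1) ^ 2 : F) : OnePoint F) := by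
  rcases eq_or_ne x 1 with rfl | hx1
  · simp
  have hadd : x + 1 ≠ 0 := fun h => hx (eq_neg_of_add_eq_zero_left h)
  have hsub : x - 1 ≠ 0 := sub_ne_zero.mpr hx1
  rw [psi_coe hx1, sMap_coe (div_ne_zero hadd hsub), inv_div, div_pow]

lemma exists_psi_eq_coe (h2 : (2 : F) ≠ 0) {c : F} (hc : c ≠ 1) : ∃ β : F, psi F β = c :=
  ⟨(c + 1) / (c - 1), by rw [← psi_coe hc, psi_involutive h2]⟩

lemma units_coe_semiconj_sMap :
    Function.Semiconj (fun u : Fˣ => ((u : F) : OnePoint F)) (· ^ (-2 : ℤ)) (sMap F) := by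
  intro u
  simp [sMap_coe]

lemma sMap_eq_inv_sq_iff {b : F} (hb : b ≠ 0) {z : OnePoint F} :
    sMap F z = ↑(b⁻¹ ^ 2) ↔ z = b ∨ z = ↑(-b) := by
  cases z with
  | infty => simp [hb, eq_comm (a := (0 : F))]
  | coe c =>
    rcases eq_or_ne c 0 with rfl | hc
    · simp [hb, eq_comm (a := (0 : F))]
    rw [sMap_coe hc, OnePoint.coe_eq_coe, OnePoint.coe_eq_coe, OnePoint.coe_eq_coe, inv_pow,
      inv_pow, inv_inj, sq_eq_sq_iff_eq_or_eq_neg]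

section CharThree

variable [CharP F 3]

lemma psi_theta_coe {x : F} (hx0 : x ≠ 0) (hx : x ≠ -1) :
    psi F (theta F x) = (((x - 1) ^ 2 / (x + 1) ^ 2 : F) : OnePoint F) := by
  have h3 : (3 : F) = 0 := by exact_mod_cast CharP.cast_eq_zero F 3
  have hadd : x + 1 ≠ 0 := fun h => hx (eq_neg_of_add_eq_zero_left h)
  -- in characteristic 3, `x + x⁻¹ ∓ 1 = (x ± 1)² / x`
  have hsub : x + x⁻¹ - 1 = (x + 1) ^ 2 / x := by
    field_simp
    linear_combination -x * h3
  have hne : x + x⁻¹ ≠ 1 := by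
    rw [Ne, ← sub_eq_zero, hsub]
    exact div_ne_zero (pow_ne_zero 2 hadd) hx0
  have hplus : x + x⁻¹ + 1 = (x - 1) ^ 2 / x := by
    field_simp
    linear_combination x * h3
  rw [theta_coe hx0, psi_coe hne, hplus, hsub, div_div_div_cancel_right₀ hx0]

lemma psi_comp_theta : Function.Semiconj (psi F) (theta F) (sMap F) := by
  have h3 : (3 : F) = 0 := by exact_mod_cast CharP.cast_eq_zero F 3
  have h2 : (2 : F) ≠ 0 := two_ne_zero_of_charP_three
  intro x
  cases x with
  | infty => simp [sMap_coe]
  | coe x =>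
    rcases eq_or_ne x 0 with rfl | hx0
    · simp [psi_coe, sMap_coe]
    rcases eq_or_ne x (-1) with rfl | hx
    · have h1 : (-1 : F) ≠ 1 := fun h => h2 (by linear_combination -h)
      rw [theta_coe hx0, psi_coe h1, show (-1 : F) + (-1)⁻¹ = 1 by linear_combination -h3]
      simp
    rw [psi_theta_coe hx0 hx, sMap_psi_coe hx]

lemma theta_eq_iff {x y : OnePoint F} : theta F x = y ↔ sMap F (psi F x) = psi F y := by
  rw [← psi_comp_theta, (psi_involutive two_ne_zero_of_charP_three).injective.eq_iff]

lemma mem_periodicPts_theta_iff {x : OnePoint F} {c : F} (hx : psi F x = c) (hc : c ≠ 0) :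
    x ∈ Function.periodicPts (theta F) ↔ Odd (orderOf c) := by
  rw [← psi_comp_theta.mem_periodicPts_iff (psi_involutive two_ne_zero_of_charP_three).injective,
    hx, ← Units.val_mk0 hc, units_coe_semiconj_sMap.mem_periodicPts_iff
      (OnePoint.coe_injective.comp Units.val_injective), mem_periodicPts_zpow_neg_two_iff,
    orderOf_units]

end CharThree

variable (F) in
theorem preimages_of_periodic [Fintype F] (n : ℕ)
    (hF : Fintype.card F = 3 ^ n)
    (α : F) (hα1 : α ≠ 1) (hα2 : α ≠ -1)
    (hαp : ∃ k : ℕ, 0 < k ∧ (theta F)^[k] (α : OnePoint F) = (α : OnePoint F)) :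
    ∃ β₁ β₂ b₁ b₂ : F, β₁ ≠ β₂ ∧
      theta F (β₁ : OnePoint F) = (α : OnePoint F) ∧
      theta F (β₂ : OnePoint F) = (α : OnePoint F) ∧
      (∀ x : F, theta F (x : OnePoint F) = (α : OnePoint F) → x = β₁ ∨ x = β₂) ∧
      psi F (β₁ : OnePoint F) = (b₁ : OnePoint F) ∧
      psi F (β₂ : OnePoint F) = (b₂ : OnePoint F) ∧
      Odd (orderOf b₁) ∧
      orderOf b₂ = 2 * orderOf b₁ ∧
      (∃ k : ℕ, 0 < k ∧ (theta F)^[k] (β₁ : OnePoint F) = (β₁ : OnePoint F)) ∧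
      ¬ (∃ k : ℕ, 0 < k ∧ (theta F)^[k] (β₂ : OnePoint F) = (β₂ : OnePoint F)) := by
  have : CharP F 3 := charP_of_card_eq_prime_pow hF
  have h2 : (2 : F) ≠ 0 := two_ne_zero_of_charP_three
  have hψ := (psi_involutive h2).injective
  set a := (α + 1) / (α - 1)
  have hψα : psi F α = a := psi_coe hα1
  have ha0 : a ≠ 0 := div_ne_zero (fun h => hα2 (eq_neg_of_add_eq_zero_left h)) (sub_ne_zero.2 hα1)
  have ha1 : a ≠ 1 := fun h => OnePoint.coe_ne_infty α (hψ (by rw [hψα, h, psi_infty]))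
  have ha_odd : Odd (orderOf a) := (mem_periodicPts_theta_iff hψα ha0).1 hαp
  obtain ⟨b, hb, hb_odd⟩ := exists_sq_eq_of_odd_orderOf (a := a⁻¹) (by rwa [orderOf_inv₀])
  have hba : b⁻¹ ^ 2 = a := by rw [inv_pow, hb, inv_inv]
  have hb0 : b ≠ 0 := by rintro rfl; simp [ha0.symm] at hba
  obtain ⟨β₁, hβ₁⟩ := exists_psi_eq_coe h2 (c := b) (by rintro rfl; simp [ha1.symm] at hba)
  obtain ⟨β₂, hβ₂⟩ := exists_psi_eq_coe h2 (c := -b) (by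
    intro h
    rw [← hba, ← neg_sq, ← inv_neg, h] at ha1
    simp at ha1)
  have hfiber : ∀ x : F, theta F x = α ↔ x = β₁ ∨ x = β₂ := fun x => by
    rw [theta_eq_iff, hψα, ← hba, sMap_eq_inv_sq_iff hb0, ← hβ₁, ← hβ₂, hψ.eq_iff, hψ.eq_iff,
      OnePoint.coe_eq_coe, OnePoint.coe_eq_coe]
  have hβ : β₁ ≠ β₂ := by
    rintro rfl
    have h2b : 2 * b = 0 := by linear_combination OnePoint.coe_injective (hβ₁.symm.trans hβ₂)
    exact hb0 ((mul_eq_zero.1 h2b).resolve_left h2)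
  have hord : orderOf (-b) = 2 * orderOf b :=
    orderOf_neg_of_odd_orderOf (by rw [ringChar.eq F 3]; decide) hb_odd
  refine ⟨β₁, β₂, b, -b, hβ, (hfiber β₁).2 (.inl rfl), (hfiber β₂).2 (.inr rfl),
    fun x => (hfiber x).1, hβ₁, hβ₂, hb_odd, hord, (mem_periodicPts_theta_iff hβ₁ hb0).2 hb_odd, ?_⟩
  change (β₂ : OnePoint F) ∉ Function.periodicPts (theta F)
  rw [mem_periodicPts_theta_iff hβ₂ (neg_ne_zero.2 hb0), hord, Nat.not_odd_iff_even]
  exact even_two_mul _
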